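/- arXiv:1504.06830 — 2 statements merged into one kernel-verified Lean document; each statement's English description precedes it below -/
import Mathlib

section
/- For discrete random variables A, B, C, D on the same probability space, if A and D are conditionally independent given C, then I(A;B|C) ≤ I(A;B|C,D). -/
open scoped Classical BigOperators
noncomputable section

/-- Probability of an event under a discrete distribution `μ` on a finite sample space. -/
def pr {Ω : Type*} [Fintype Ω] (μ : Ω → ℝ) (p : Ω → Prop) : ℝ :=
  ∑ ω, if p ω then μ ω else 0

/-- The distribution (pmf) of a random variable `A` under `μ`. -/
def dist {Ω α : Type*} [Fintype Ω] [Fintype α] (μ : Ω → ℝ) (A : Ω → α) : α → ℝ :=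
  fun a => pr μ (fun ω => A ω = a)

/-- Shannon entropy (in bits) of a random variable `A` under `μ`. -/
def ent {Ω α : Type*} [Fintype Ω] [Fintype α] (μ : Ω → ℝ) (A : Ω → α) : ℝ :=
  ∑ a, -(dist μ A a * Real.logb 2 (dist μ A a))

/-- Conditional entropy `H(A|B)` (in bits). -/
def condEnt {Ω α β : Type*} [Fintype Ω] [Fintype α] [Fintype β]
    (μ : Ω → ℝ) (A : Ω → α) (B : Ω → β) : ℝ :=
  ent μ (fun ω => (A ω, B ω)) - ent μ B

/-- Conditional mutual information `I(A;B|C)` (in bits). -/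
def condMI {Ω α β γ : Type*} [Fintype Ω] [Fintype α] [Fintype β] [Fintype γ]
    (μ : Ω → ℝ) (A : Ω → α) (B : Ω → β) (C : Ω → γ) : ℝ :=
  condEnt μ A C - condEnt μ A (fun ω => (B ω, C ω))

/-- Mutual information `I(A;B)` (in bits). -/
def mutualInfo {Ω α β : Type*} [Fintype Ω] [Fintype α] [Fintype β]
    (μ : Ω → ℝ) (A : Ω → α) (B : Ω → β) : ℝ :=
  ent μ A - condEnt μ A B

/-- Kullback-Leibler divergence `D(p‖q)` in bits. -/
def kl {α : Type*} [Fintype α] (p q : α → ℝ) : ℝ :=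
  ∑ x, p x * Real.logb 2 (p x / q x)

/-- Kullback-Leibler divergence `D(p‖q)` in nats. -/
def klNat {α : Type*} [Fintype α] (p q : α → ℝ) : ℝ :=
  ∑ x, p x * Real.log (p x / q x)

/-! Applying the chain rule to `I(A; (B, D) | C)` in both orders gives
`I(A;B|C) + I(A;D|C,B) = I(A;D|C) + I(A;B|C,D)`. The term `I(A;D|C)` vanishes by hypothesis and
`I(A;D|C,B) ≥ 0`, because a conditional mutual information `I(X;Y|Z)` is the Kullback-Leibler
divergence of `P_XYZ` from `P_XZ P_YZ / P_Z`, and both have the same total mass. -/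

open Function

lemma sub_le_mul_log_div {p q : ℝ} (hp : 0 ≤ p) (hq : 0 ≤ q) (hpq : q = 0 → p = 0) :
    p - q ≤ p * Real.log (p / q) := by
  rcases hp.eq_or_lt with rfl | hp
  · simpa using hq
  have hq : 0 < q := hq.lt_of_ne fun h => hp.ne' (hpq h.symm)
  have hlog := Real.one_sub_inv_le_log_of_pos (div_pos hp hq)
  rw [inv_div] at hlog
  calc p - q = p * (1 - q / p) := by field_simp
    _ ≤ p * Real.log (p / q) := mul_le_mul_of_nonneg_left hlog hp.le

lemma klNat_nonneg {ι : Type*} [Fintype ι] {p q : ι → ℝ} (hp : ∀ x, 0 ≤ p x) (hq : ∀ x, 0 ≤ q x)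
    (hpq : ∀ x, q x = 0 → p x = 0) (hsum : ∑ x, q x ≤ ∑ x, p x) : 0 ≤ klNat p q :=
  calc 0 ≤ ∑ x, (p x - q x) := by rw [Finset.sum_sub_distrib]; linarith
    _ ≤ klNat p q := Finset.sum_le_sum fun x _ => sub_le_mul_log_div (hp x) (hq x) (hpq x)

lemma kl_eq_klNat_div_log_two {ι : Type*} [Fintype ι] (p q : ι → ℝ) :
    kl p q = klNat p q / Real.log 2 := by
  simp only [kl, klNat, Real.logb, Finset.sum_div, mul_div_assoc]

lemma kl_nonneg {ι : Type*} [Fintype ι] {p q : ι → ℝ} (hp : ∀ x, 0 ≤ p x) (hq : ∀ x, 0 ≤ q x)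
    (hpq : ∀ x, q x = 0 → p x = 0) (hsum : ∑ x, q x ≤ ∑ x, p x) : 0 ≤ kl p q := by
  rw [kl_eq_klNat_div_log_two]
  exact div_nonneg (klNat_nonneg hp hq hpq hsum) (Real.log_nonneg one_le_two)

section Entropy

variable {Ω α β γ : Type*} [Fintype Ω] [Fintype α] [Fintype β] [Fintype γ] (μ : Ω → ℝ)

lemma pr_nonneg (hμ : ∀ ω, 0 ≤ μ ω) (p : Ω → Prop) : 0 ≤ pr μ p :=
  Finset.sum_nonneg fun ω _ => by split_ifs <;> simp [hμ ω]

lemma dist_apply_nonneg (hμ : ∀ ω, 0 ≤ μ ω) (X : Ω → α) (a : α) : 0 ≤ dist μ X a :=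
  pr_nonneg μ hμ _

lemma sum_dist (X : Ω → α) : ∑ a, dist μ X a = ∑ ω, μ ω := by
  unfold _root_.dist pr
  rw [Finset.sum_comm]
  simp

lemma sum_dist_prod_mk_left (X : Ω → α) (Y : Ω → β) (b : β) :
    ∑ a, dist μ (fun ω => (X ω, Y ω)) (a, b) = dist μ Y b := by
  unfold _root_.dist pr
  rw [Finset.sum_comm]
  simp [Prod.ext_iff, ite_and]

lemma dist_comp_eq_sum (X : Ω → α) (f : α → β) (b : β) :
    dist μ (fun ω => f (X ω)) b = ∑ a with f a = b, dist μ X a := by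
  unfold _root_.dist pr
  rw [Finset.sum_comm]
  simp

lemma dist_le_dist_comp (hμ : ∀ ω, 0 ≤ μ ω) (X : Ω → α) (f : α → β) (a : α) :
    dist μ X a ≤ dist μ (fun ω => f (X ω)) (f a) := by
  rw [dist_comp_eq_sum μ X f]
  exact Finset.single_le_sum (fun a _ => dist_apply_nonneg μ hμ X a)
    (Finset.mem_filter.2 ⟨Finset.mem_univ a, rfl⟩)

lemma dist_comp_pos (hμ : ∀ ω, 0 ≤ μ ω) (X : Ω → α) (f : α → β) {a : α}
    (ha : 0 < dist μ X a) : 0 < dist μ (fun ω => f (X ω)) (f a) :=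
  ha.trans_le (dist_le_dist_comp μ hμ X f a)

lemma dist_comp_apply_of_injective (X : Ω → α) {f : α → β} (hf : Injective f) (a : α) :
    dist μ (fun ω => f (X ω)) (f a) = dist μ X a := by
  simp only [_root_.dist, pr, hf.eq_iff]

lemma ent_comp_of_injective (X : Ω → α) {f : α → β} (hf : Injective f) :
    ent μ (fun ω => f (X ω)) = ent μ X := by
  refine (Fintype.sum_of_injective f hf _ _ (fun b hb => ?_) fun a => ?_).symm
  · have : dist μ (fun ω => f (X ω)) b = 0 :=
      Finset.sum_eq_zero fun ω _ => if_neg fun h => hb ⟨X ω, h⟩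
    simp [this]
  · rw [dist_comp_apply_of_injective μ X hf]

lemma ent_comp_eq_sum (X : Ω → α) (f : α → β) :
    ent μ (fun ω => f (X ω))
      = -∑ a, dist μ X a * Real.logb 2 (dist μ (fun ω => f (X ω)) (f a)) := by
  rw [ent, Finset.sum_neg_distrib, neg_inj, ← Finset.sum_fiberwise Finset.univ f]
  refine Finset.sum_congr rfl fun b _ => ?_
  nth_rw 1 [dist_comp_eq_sum μ X f b]
  rw [Finset.sum_mul]
  exact Finset.sum_congr rfl fun a ha => by rw [(Finset.mem_filter.1 ha).2]

lemma condEnt_congr_of_injective (X : Ω → α) {Y : Ω → β} {Y' : Ω → γ} {f : β → γ}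
    (hf : Injective f) (hY' : ∀ ω, Y' ω = f (Y ω)) : condEnt μ X Y' = condEnt μ X Y := by
  obtain rfl : Y' = fun ω => f (Y ω) := funext hY'
  unfold condEnt
  congr 1
  · exact ent_comp_of_injective μ (fun ω => (X ω, Y ω)) (injective_id.prodMap hf)
  · exact ent_comp_of_injective μ Y hf

/-- The law `P_{X|Z} P_{Y|Z} P_Z`; it is `0` where `P_Z` vanishes, as `x / 0 = 0`. -/
def condProdDist (X : Ω → α) (Y : Ω → β) (Z : Ω → γ) (w : α × β × γ) : ℝ :=
  dist μ (fun ω => (X ω, Z ω)) (w.1, w.2.2) * dist μ (fun ω => (Y ω, Z ω)) w.2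
    / dist μ Z w.2.2

variable (X : Ω → α) (Y : Ω → β) (Z : Ω → γ)

lemma condProdDist_nonneg (hμ : ∀ ω, 0 ≤ μ ω) (w : α × β × γ) : 0 ≤ condProdDist μ X Y Z w :=
  div_nonneg (mul_nonneg (dist_apply_nonneg μ hμ _ _) (dist_apply_nonneg μ hμ _ _))
    (dist_apply_nonneg μ hμ _ _)

lemma condProdDist_pos (hμ : ∀ ω, 0 ≤ μ ω) {w : α × β × γ}
    (hw : 0 < dist μ (fun ω => (X ω, Y ω, Z ω)) w) : 0 < condProdDist μ X Y Z w :=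
  div_pos
    (mul_pos (dist_comp_pos μ hμ _ (fun w => (w.1, w.2.2)) hw) (dist_comp_pos μ hμ _ Prod.snd hw))
    (dist_comp_pos μ hμ _ (fun w => w.2.2) hw)

lemma sum_condProdDist : ∑ w, condProdDist μ X Y Z w = ∑ ω, μ ω := by
  have hsplit : ∑ w, condProdDist μ X Y Z w = ∑ c, (∑ a, dist μ (fun ω => (X ω, Z ω)) (a, c))
      * (∑ b, dist μ (fun ω => (Y ω, Z ω)) (b, c)) / dist μ Z c := by
    simp only [condProdDist, Fintype.sum_prod_type, Finset.sum_mul_sum, Finset.sum_div]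
    exact (Finset.sum_congr rfl fun _ _ => Finset.sum_comm).trans Finset.sum_comm
  simp only [hsplit, sum_dist_prod_mk_left, mul_self_div_self, sum_dist]

lemma condMI_eq_kl (hμ : ∀ ω, 0 ≤ μ ω) :
    condMI μ X Y Z = kl (dist μ (fun ω => (X ω, Y ω, Z ω))) (condProdDist μ X Y Z) := by
  set W : Ω → α × β × γ := fun ω => (X ω, Y ω, Z ω)
  have hW : ent μ W = -∑ w, dist μ W w * Real.logb 2 (dist μ W w) := ent_comp_eq_sum μ W id
  have hXZ : ent μ (fun ω => (X ω, Z ω))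
      = -∑ w, dist μ W w * Real.logb 2 (dist μ (fun ω => (X ω, Z ω)) (w.1, w.2.2)) :=
    ent_comp_eq_sum μ W (fun w => (w.1, w.2.2))
  have hYZ : ent μ (fun ω => (Y ω, Z ω))
      = -∑ w, dist μ W w * Real.logb 2 (dist μ (fun ω => (Y ω, Z ω)) w.2) :=
    ent_comp_eq_sum μ W Prod.snd
  have hZ : ent μ Z = -∑ w, dist μ W w * Real.logb 2 (dist μ Z w.2.2) :=
    ent_comp_eq_sum μ W (fun w => w.2.2)
  have hterm : ∀ w, dist μ W w * Real.logb 2 (dist μ W w / condProdDist μ X Y Z w)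
      = dist μ W w * (Real.logb 2 (dist μ W w) + Real.logb 2 (dist μ Z w.2.2)
          - Real.logb 2 (dist μ (fun ω => (X ω, Z ω)) (w.1, w.2.2))
          - Real.logb 2 (dist μ (fun ω => (Y ω, Z ω)) w.2)) := by
    intro w
    rcases (dist_apply_nonneg μ hμ W w).eq_or_lt with hw | hw
    · simp [← hw]
    have hXZ : 0 < dist μ (fun ω => (X ω, Z ω)) (w.1, w.2.2) :=
      dist_comp_pos μ hμ W (fun w => (w.1, w.2.2)) hw
    have hYZ : 0 < dist μ (fun ω => (Y ω, Z ω)) w.2 := dist_comp_pos μ hμ W Prod.snd hw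
    have hZ : 0 < dist μ Z w.2.2 := dist_comp_pos μ hμ W (fun w => w.2.2) hw
    rw [condProdDist, Real.logb_div hw.ne' (div_pos (mul_pos hXZ hYZ) hZ).ne',
      Real.logb_div (mul_pos hXZ hYZ).ne' hZ.ne', Real.logb_mul hXZ.ne' hYZ.ne']
    ring
  unfold condMI condEnt kl
  rw [hW, hXZ, hYZ, hZ]
  simp only [hterm, mul_add, mul_sub, Finset.sum_add_distrib, Finset.sum_sub_distrib]
  ring

theorem condMI_nonneg (hμ : ∀ ω, 0 ≤ μ ω) : 0 ≤ condMI μ X Y Z := by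
  rw [condMI_eq_kl μ X Y Z hμ]
  refine kl_nonneg (dist_apply_nonneg μ hμ _) (condProdDist_nonneg μ X Y Z hμ) (fun w hw => ?_)
    (by rw [sum_dist, sum_condProdDist])
  by_contra hne
  exact (condProdDist_pos μ X Y Z hμ ((dist_apply_nonneg μ hμ _ w).lt_of_ne' hne)).ne' hw

variable {δ : Type*} [Fintype δ] (W : Ω → δ)

theorem condMI_prod_eq_add :
    condMI μ X (fun ω => (Y ω, W ω)) Z = condMI μ X W Z + condMI μ X Y (fun ω => (Z ω, W ω)) := by
  have hYWZ : condEnt μ X (fun ω => ((Y ω, W ω), Z ω)) = condEnt μ X (fun ω => (Y ω, Z ω, W ω)) :=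
    condEnt_congr_of_injective μ X
      ((Equiv.prodAssoc β δ γ).symm.injective.comp (injective_id.prodMap Prod.swap_injective))
      fun _ => rfl
  have hWZ : condEnt μ X (fun ω => (W ω, Z ω)) = condEnt μ X (fun ω => (Z ω, W ω)) :=
    condEnt_congr_of_injective μ X Prod.swap_injective fun _ => rfl
  unfold condMI
  rw [hYWZ, hWZ]
  ring

theorem condMI_prod_comm :
    condMI μ X (fun ω => (Y ω, W ω)) Z = condMI μ X (fun ω => (W ω, Y ω)) Z := by
  unfold condMI
  congr 1
  exact condEnt_congr_of_injective μ X (Prod.swap_injective.prodMap injective_id) fun _ => rfl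

end Entropy

theorem condMI_le_condMI_of_condIndep_general
    {Ω α β γ δ : Type*} [Fintype Ω] [Fintype α] [Fintype β] [Fintype γ] [Fintype δ]
    (μ : Ω → ℝ) (hμ0 : ∀ ω, 0 ≤ μ ω)
    (A : Ω → α) (B : Ω → β) (C : Ω → γ) (D : Ω → δ)
    (hindep : condMI μ A D C = 0) :
    condMI μ A B C ≤ condMI μ A B (fun ω => (C ω, D ω)) :=
  calc condMI μ A B C
      ≤ condMI μ A B C + condMI μ A D (fun ω => (C ω, B ω)) :=
        le_add_of_nonneg_right (condMI_nonneg μ A D _ hμ0)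
    _ = condMI μ A (fun ω => (D ω, B ω)) C := (condMI_prod_eq_add μ A D C B).symm
    _ = condMI μ A (fun ω => (B ω, D ω)) C := condMI_prod_comm μ A D C B
    _ = condMI μ A D C + condMI μ A B (fun ω => (C ω, D ω)) := condMI_prod_eq_add μ A B C D
    _ = condMI μ A B (fun ω => (C ω, D ω)) := by rw [hindep, zero_add]

/-- Conditioning on independent variables does not decrease information:
if `A` and `D` are conditionally independent given `C` (i.e. `I(A;D|C) = 0`),
then `I(A;B|C) ≤ I(A;B|C,D)`. -/
theorem condMI_le_condMI_of_condIndep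
    {Ω α β γ δ : Type*} [Fintype Ω] [Fintype α] [Fintype β] [Fintype γ] [Fintype δ]
    (μ : Ω → ℝ) (hμ0 : ∀ ω, 0 ≤ μ ω) (hμ1 : ∑ ω, μ ω = 1)
    (A : Ω → α) (B : Ω → β) (C : Ω → γ) (D : Ω → δ)
    (hindep : condMI μ A D C = 0) :
    condMI μ A B C ≤ condMI μ A B (fun ω => (C ω, D ω)) :=
  condMI_le_condMI_of_condIndep_general μ hμ0 A B C D hindep
end
end

section
/- Total variation distance to a zero-information distribution does not bound information: let X be uniform on {0,1}^n and δ ∈ (0,1). Define M to equal X with probability δ and an independent uniform string with probability 1-δ (the choice made by an independent coin). Then M is δ-close in total variation to a distribution independent of X, yet I(M; X) ≥ δ·n - 1. -/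
open scoped Classical BigOperators
noncomputable section

/-! Since `U` is uniform, so is `M`: its law is exactly that of `U`. But `M = X` with probability
`s = δ + (1 - δ) / N` (`N = 2ⁿ`), and a direct computation of the three entropies gives, in nats,
`I(M; X) = s log N - s log s + (1 - s) log (1 - δ)`. As `1 - s ≤ 1 - δ`, this is at least
`s log N - h(s) ≥ δ log N - log 2`, where `h ≤ log 2` is the binary entropy. -/

open Real Finset

lemma dist_eq_sum_ite {Ω α : Type*} [Fintype Ω] [Fintype α] (μ : Ω → ℝ) (A : Ω → α) (a : α) :
    dist μ A a = ∑ ω, if A ω = a then μ ω else 0 := rfl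

lemma ent_eq_sum_negMulLog_div_log_two {Ω α : Type*} [Fintype Ω] [Fintype α]
    (μ : Ω → ℝ) (A : Ω → α) : ent μ A = (∑ a, negMulLog (dist μ A a)) / log 2 := by
  simp only [ent, negMulLog, logb, sum_div]
  exact sum_congr rfl fun _ _ => by ring

lemma ent_of_dist_eq_inv_card {Ω α : Type*} [Fintype Ω] [Fintype α] [Nonempty α]
    (μ : Ω → ℝ) (A : Ω → α) (h : ∀ a, dist μ A a = 1 / Fintype.card α) :
    ent μ A = logb 2 (Fintype.card α) := by
  have hN : (Fintype.card α : ℝ) ≠ 0 := by positivity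
  simp only [ent_eq_sum_negMulLog_div_log_two, h, sum_const, card_univ, nsmul_eq_mul,
    negMulLog, one_div, log_inv, logb]
  field_simp

lemma sum_sum_ite_eq_add {α : Type*} [Fintype α] (f : ℝ → ℝ) (b c : ℝ) :
    ∑ m : α, ∑ x : α, f (b + if m = x then c else 0)
      = (Fintype.card α) ^ 2 * f b + Fintype.card α * (f (b + c) - f b) := by
  have hsplit : ∀ m x : α, f (b + if m = x then c else 0)
      = f b + if m = x then f (b + c) - f b else 0 := by
    intro m x
    split_ifs <;> simp
  simp only [hsplit, sum_add_distrib, sum_ite_eq, mem_univ, if_true, sum_const, card_univ,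
    nsmul_eq_mul]
  ring

lemma mutualInfo_eq_ent_add_ent_sub_ent {Ω α β : Type*} [Fintype Ω] [Fintype α] [Fintype β]
    (μ : Ω → ℝ) (A : Ω → α) (B : Ω → β) :
    mutualInfo μ A B = ent μ A + ent μ B - ent μ (fun ω => (A ω, B ω)) := by
  rw [mutualInfo, condEnt]
  ring

lemma negMulLog_div (x y : ℝ) : negMulLog (x / y) = (negMulLog x + x * log y) / y := by
  rw [div_eq_mul_inv, negMulLog_mul]
  simp only [negMulLog, log_inv]
  ring

section Mixture

variable {α : Type*} [Fintype α]

/-- The joint law of `(X, U, B)` on `α × α × Bool`: `X`, `U` uniform and `B ~ Bernoulli δ`,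
independent; `mixtureOutput` is `M`. -/
def mixtureWeight (δ : ℝ) (ω : α × α × Bool) : ℝ :=
  (1 / Fintype.card α) * (1 / Fintype.card α) * (if ω.2.2 then δ else 1 - δ)

def mixtureOutput (ω : α × α × Bool) : α :=
  if ω.2.2 then ω.1 else ω.2.1

variable [Nonempty α] (δ : ℝ)

lemma dist_mixtureOutput (m : α) :
    dist (mixtureWeight δ) mixtureOutput m = 1 / Fintype.card α := by
  have hN : (Fintype.card α : ℝ) ≠ 0 := by positivity
  simp only [dist_eq_sum_ite, mixtureOutput, mixtureWeight, one_div, mul_ite, Fintype.sum_prod_type,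
    Fintype.univ_bool, mem_singleton, Bool.true_eq_false, not_false_eq_true, sum_insert, ↓reduceIte,
    sum_singleton, Bool.false_eq_true, sum_add_distrib, sum_ite_irrel, sum_const, card_univ,
    nsmul_eq_mul, mul_zero, sum_ite_eq', mem_univ]
  field_simp
  ring

lemma dist_fst_mixtureWeight (x : α) :
    dist (mixtureWeight δ) Prod.fst x = 1 / Fintype.card α := by
  have hN : (Fintype.card α : ℝ) ≠ 0 := by positivity
  simp only [dist_eq_sum_ite, mixtureWeight, one_div, mul_ite, Fintype.sum_prod_type, sum_ite_irrel,
    Fintype.univ_bool, mem_singleton, Bool.true_eq_false, not_false_eq_true, sum_insert, ↓reduceIte,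
    sum_singleton, Bool.false_eq_true, sum_const, card_univ, smul_add, nsmul_eq_mul, mul_zero,
    sum_ite_eq', mem_univ]
  field_simp
  ring

lemma dist_mixtureOutput_fst (m x : α) :
    dist (mixtureWeight δ) (fun ω => (mixtureOutput ω, ω.1)) (m, x)
      = (1 - δ) / Fintype.card α ^ 2 + if m = x then δ / Fintype.card α else 0 := by
  have hN : (Fintype.card α : ℝ) ≠ 0 := by positivity
  simp only [mixtureOutput, dist_eq_sum_ite, Prod.mk.injEq, mixtureWeight, one_div, mul_ite,
    ite_and,
    Fintype.sum_prod_type, Fintype.univ_bool, mem_singleton, Bool.true_eq_false, not_false_eq_true,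
    sum_insert, ↓reduceIte, sum_singleton, Bool.false_eq_true, sum_add_distrib, sum_ite_irrel,
    sum_const, card_univ, nsmul_eq_mul, mul_zero, sum_ite_eq', mem_univ]
  split_ifs <;> field_simp <;> ring

lemma ent_mixtureOutput_fst_mul_log_two :
    ent (mixtureWeight (α := α) δ) (fun ω => (mixtureOutput ω, ω.1)) * log 2
      = Fintype.card α ^ 2 * negMulLog ((1 - δ) / Fintype.card α ^ 2)
        + Fintype.card α * (negMulLog ((1 - δ) / Fintype.card α ^ 2 + δ / Fintype.card α)
          - negMulLog ((1 - δ) / Fintype.card α ^ 2)) := by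
  rw [ent_eq_sum_negMulLog_div_log_two, div_mul_cancel₀ _ (log_pos one_lt_two).ne',
    Fintype.sum_prod_type]
  simp only [dist_mixtureOutput_fst]
  exact sum_sum_ite_eq_add _ _ _

lemma mutualInfo_mixtureOutput_fst_mul_log_two :
    mutualInfo (mixtureWeight (α := α) δ) mixtureOutput Prod.fst * log 2
      = (δ + (1 - δ) / Fintype.card α) * log (Fintype.card α)
        - negMulLog (δ + (1 - δ) / Fintype.card α)
        + (1 - δ) * (1 - 1 / Fintype.card α) * log (1 - δ) := by
  have hN : (Fintype.card α : ℝ) ≠ 0 := by positivity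
  have hdiag : (1 - δ) / Fintype.card α ^ 2 + δ / Fintype.card α
      = (δ + (1 - δ) / Fintype.card α) / Fintype.card α := by
    field_simp
    ring
  rw [mutualInfo_eq_ent_add_ent_sub_ent, sub_mul, ent_mixtureOutput_fst_mul_log_two, hdiag,
    ent_of_dist_eq_inv_card _ _ (dist_mixtureOutput δ),
    ent_of_dist_eq_inv_card _ _ (dist_fst_mixtureWeight δ), negMulLog_div, negMulLog_div]
  simp only [logb, negMulLog, log_pow]
  field_simp
  ring

theorem mutualInfo_mixtureOutput_fst_ge (hδ : δ ≤ 1) :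
    δ * logb 2 (Fintype.card α) - 1
      ≤ mutualInfo (mixtureWeight (α := α) δ) mixtureOutput Prod.fst := by
  -- `s` is the probability that `M = X`.
  set s := δ + (1 - δ) / Fintype.card α with hs
  have hδs : δ ≤ s := le_add_of_nonneg_right (div_nonneg (sub_nonneg.2 hδ) (Nat.cast_nonneg _))
  have hs1 : s ≤ 1 := by
    have : (1 - δ) / Fintype.card α ≤ 1 - δ :=
      div_le_self (sub_nonneg.2 hδ) (Nat.one_le_cast.2 Fintype.card_pos)
    linarith
  have hlog : (1 - s) * log (1 - s) ≤ (1 - s) * log (1 - δ) := by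
    rcases (sub_nonneg.2 hs1).eq_or_lt with h | h
    · simp [← h]
    · exact mul_le_mul_of_nonneg_left (log_le_log h (by linarith)) h.le
  have hbin : negMulLog s + negMulLog (1 - s) ≤ log 2 :=
    binEntropy_eq_negMulLog_add_negMulLog_one_sub s ▸ binEntropy_le_log_two
  have hgain : δ * log (Fintype.card α) ≤ s * log (Fintype.card α) :=
    mul_le_mul_of_nonneg_right hδs (log_natCast_nonneg _)
  have hnats : δ * log (Fintype.card α) - log 2
      ≤ mutualInfo (mixtureWeight (α := α) δ) mixtureOutput Prod.fst * log 2 := by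
    rw [mutualInfo_mixtureOutput_fst_mul_log_two, ← hs,
      show (1 - δ) * (1 - 1 / Fintype.card α) = 1 - s by rw [hs]; ring]
    simp only [negMulLog] at hbin ⊢
    linarith
  have hbits : δ * logb 2 (Fintype.card α) - 1 = (δ * log (Fintype.card α) - log 2) / log 2 := by
    simp only [logb]
    field_simp
  rwa [hbits, div_le_iff₀ (log_pos one_lt_two)]

end Mixture

/-- Closeness to a zero-information distribution does not bound information:
with `X` uniform on `{0,1}ⁿ`, `U` an independent uniform string, `B ~ Ber(δ)` independent,
and `M = X` if `B` else `U`, the law of `M` is `δ`-close in total variation to the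
(X-independent) uniform law, yet `I(M;X) ≥ δ·n - 1` bits. -/
theorem tv_close_but_high_information (n : ℕ) (δ : ℝ) (hδ : δ ∈ Set.Ioo (0 : ℝ) 1) :
    ((1 / 2) * ∑ m : Fin n → Bool,
        |dist (fun ω : (Fin n → Bool) × (Fin n → Bool) × Bool =>
            ((1 : ℝ) / 2 ^ n) * ((1 : ℝ) / 2 ^ n) * (if ω.2.2 then δ else 1 - δ))
          (fun ω => if ω.2.2 then ω.1 else ω.2.1) m - (1 / 2 : ℝ) ^ n| ≤ δ) ∧
    mutualInfo (fun ω : (Fin n → Bool) × (Fin n → Bool) × Bool =>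
        ((1 : ℝ) / 2 ^ n) * ((1 : ℝ) / 2 ^ n) * (if ω.2.2 then δ else 1 - δ))
      (fun ω => if ω.2.2 then ω.1 else ω.2.1) (fun ω => ω.1)
      ≥ δ * n - 1 := by
  have hcard : (Fintype.card (Fin n → Bool) : ℝ) = 2 ^ n := by simp
  have hμ : (fun ω : (Fin n → Bool) × (Fin n → Bool) × Bool =>
      ((1 : ℝ) / 2 ^ n) * ((1 : ℝ) / 2 ^ n) * (if ω.2.2 then δ else 1 - δ)) = mixtureWeight δ := by
    funext ω
    rw [mixtureWeight, hcard]
  have hM : (fun ω : (Fin n → Bool) × (Fin n → Bool) × Bool => if ω.2.2 then ω.1 else ω.2.1)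
      = mixtureOutput := rfl
  rw [hμ, hM]
  constructor
  · simpa [dist_mixtureOutput] using hδ.1.le
  · have h := mutualInfo_mixtureOutput_fst_ge (α := Fin n → Bool) δ hδ.2.le
    rwa [hcard, logb_pow, logb_self_eq_one one_lt_two, mul_one] at h
end
end
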